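/- The centre of the group S_n* equals K*·1 (the nonzero scalar multiples of the identity), and the centre of the group (1+a_n)* is trivial. -/

import Mathlib

open MvPolynomial Module

set_option maxHeartbeats 1000000
set_option synthInstance.maxHeartbeats 400000

noncomputable section

variable (K : Type*) [Field K]

/-- The polynomial algebra `Pₙ = K[x₁,…,xₙ]`. -/
abbrev Pn (K : Type*) [Field K] (n : ℕ) := MvPolynomial (Fin n) K

/-- The algebra of `K`-linear endomorphisms of `Pₙ`. -/
abbrev EndPn (K : Type*) [Field K] (n : ℕ) := Module.End K (Pn K n)

/-- Multiplication by `xᵢ` on `Pₙ`. -/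
def xE (n : ℕ) (i : Fin n) : EndPn K n := LinearMap.mulLeft K (X i)

/-- The left inverse `yᵢ` of `xᵢ`: `yᵢ(x^α) = x^{α - eᵢ}` if `αᵢ > 0`, and `0` otherwise. -/
def yE (n : ℕ) (i : Fin n) : EndPn K n :=
  (basisMonomials (Fin n) K).constr K fun α =>
    if α i = 0 then 0 else monomial (α - Finsupp.single i 1) (1 : K)

/-- The algebra `Sₙ` of one-sided inverses of `Pₙ`, as the subalgebra of `End_K(Pₙ)`
generated by `x₁,…,xₙ,y₁,…,yₙ`. -/
def Sn (K : Type*) [Field K] (n : ℕ) : Subalgebra K (EndPn K n) :=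
  Algebra.adjoin K (Set.range (xE K n) ∪ Set.range (yE K n))

/-- `xᵢ` as an element of `Sₙ`. -/
def xS (n : ℕ) (i : Fin n) : ↥(Sn K n) :=
  ⟨xE K n i, Algebra.subset_adjoin (Or.inl ⟨i, rfl⟩)⟩

/-- `yᵢ` as an element of `Sₙ`. -/
def yS (n : ℕ) (i : Fin n) : ↥(Sn K n) :=
  ⟨yE K n i, Algebra.subset_adjoin (Or.inr ⟨i, rfl⟩)⟩

/-- The two-sided ideal `pᵢ` of `Sₙ` generated by `1 − xᵢyᵢ`. -/
def pI (n : ℕ) (i : Fin n) : TwoSidedIdeal ↥(Sn K n) :=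
  TwoSidedIdeal.span {1 - xS K n i * yS K n i}

/-- The ideal `𝔞ₙ = p₁ + ⋯ + pₙ` of `Sₙ`. -/
def aI (n : ℕ) : TwoSidedIdeal ↥(Sn K n) := ⨆ i : Fin n, pI K n i

/-- The group `(1+I)*` of units of `Sₙ` lying in `1 + I`, as a subgroup of `Sₙˣ`. -/
def unitsIn (n : ℕ) (I : TwoSidedIdeal ↥(Sn K n)) : Subgroup (↥(Sn K n))ˣ where
  carrier := {u | ((u : ↥(Sn K n)) - 1) ∈ I}
  one_mem' := by
    show ((1 : (↥(Sn K n))ˣ) : ↥(Sn K n)) - 1 ∈ I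
    rw [Units.val_one, show (1 : ↥(Sn K n)) - 1 = 0 from sub_self (1 : ↥(Sn K n))]
    exact I.zero_mem
  mul_mem' := by
    intro a b ha hb
    show ((a * b : (↥(Sn K n))ˣ) : ↥(Sn K n)) - 1 ∈ I
    have h := mul_sub (a : ↥(Sn K n)) (b : ↥(Sn K n)) 1
    rw [show ((a * b : (↥(Sn K n))ˣ) : ↥(Sn K n)) - 1
        = (a : ↥(Sn K n)) * ((b : ↥(Sn K n)) - 1) + ((a : ↥(Sn K n)) - 1) by
      rw [h, mul_one, Units.val_mul]; abel]
    exact I.add_mem (I.mul_mem_left _ _ hb) ha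
  inv_mem' := by
    intro a ha
    show ((a⁻¹ : (↥(Sn K n))ˣ) : ↥(Sn K n)) - 1 ∈ I
    have h := mul_sub ((a⁻¹ : (↥(Sn K n))ˣ) : ↥(Sn K n)) (a : ↥(Sn K n)) 1
    rw [mul_one, Units.inv_mul] at h
    rw [show ((a⁻¹ : (↥(Sn K n))ˣ) : ↥(Sn K n)) - 1
        = -(((a⁻¹ : (↥(Sn K n))ˣ) : ↥(Sn K n)) * ((a : ↥(Sn K n)) - 1)) by rw [h]; abel]
    exact I.neg_mem (I.mul_mem_left _ _ ha)


end

/-! ### Auxiliary development -/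

noncomputable section Aux

namespace CenterAux

variable {K : Type*} [Field K] {n : ℕ}

lemma basis_apply (α : Fin n →₀ ℕ) :
    basisMonomials (Fin n) K α = monomial α (1 : K) :=
  congrFun (coe_basisMonomials (Fin n) K) α

lemma end_ext {f g : EndPn K n}
    (h : ∀ α : Fin n →₀ ℕ, f (monomial α (1 : K)) = g (monomial α 1)) : f = g :=
  (basisMonomials (Fin n) K).ext fun α => by rw [basis_apply]; exact h α

lemma one_eq : (1 : Pn K n) = monomial 0 (1 : K) := by
  rw [← MvPolynomial.C_1, MvPolynomial.C_apply]

lemma xE_apply (i : Fin n) (α : Fin n →₀ ℕ) (c : K) :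
    xE K n i (monomial α c) = monomial (α + Finsupp.single i 1) c := by
  show (X i : Pn K n) * monomial α c = _
  rw [show (X i : Pn K n) = monomial (Finsupp.single i 1) 1 from rfl,
    monomial_mul, one_mul, add_comm]

lemma yE_apply (i : Fin n) (α : Fin n →₀ ℕ) :
    yE K n i (monomial α (1 : K)) =
      if α i = 0 then 0 else monomial (α - Finsupp.single i 1) (1 : K) := by
  rw [← basis_apply, yE, Basis.constr_basis]

lemma mul_val_apply (a b : ↥(Sn K n)) (p : Pn K n) :
    ((a * b : ↥(Sn K n)) : EndPn K n) p = (a : EndPn K n) ((b : EndPn K n) p) := rfl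

lemma factor_apply (i : Fin n) (α : Fin n →₀ ℕ) :
    (((1 : ↥(Sn K n)) - xS K n i * yS K n i : ↥(Sn K n)) : EndPn K n) (monomial α (1 : K))
      = if α i = 0 then monomial α 1 else 0 := by
  have : (((1 : ↥(Sn K n)) - xS K n i * yS K n i : ↥(Sn K n)) : EndPn K n)
      = 1 - xE K n i * yE K n i := rfl
  rw [this, LinearMap.sub_apply, Module.End.one_apply, Module.End.mul_apply, yE_apply]
  by_cases h : α i = 0
  · simp [h]
  · rw [if_neg h, if_neg h, xE_apply,
      tsub_add_cancel_of_le (Finsupp.single_le_iff.mpr (Nat.one_le_iff_ne_zero.mpr h)),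
      sub_self]

/-- The projection `e` onto the constants, as an ordered product `∏ (1 - xᵢyᵢ)`. -/
def eS (K : Type*) [Field K] (n : ℕ) : ↥(Sn K n) :=
  ((List.finRange n).map fun i => (1 : ↥(Sn K n)) - xS K n i * yS K n i).prod

lemma list_prod_factor_apply (L : List (Fin n)) (α : Fin n →₀ ℕ) :
    (((L.map fun i => (1 : ↥(Sn K n)) - xS K n i * yS K n i).prod : ↥(Sn K n)) : EndPn K n)
        (monomial α (1 : K))
      = if ∀ i ∈ L, α i = 0 then monomial α 1 else 0 := by
  induction L with
  | nil =>
    rw [List.map_nil, List.prod_nil, if_pos (by intro i hi; cases hi)]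
    rfl
  | cons j L ih =>
    rw [List.map_cons, List.prod_cons, mul_val_apply, ih]
    by_cases h : ∀ i ∈ L, α i = 0
    · rw [if_pos h, factor_apply]
      by_cases hj : α j = 0
      · rw [if_pos hj, if_pos (show ∀ i ∈ j :: L, α i = 0 by
          intro i hi
          rcases List.mem_cons.mp hi with rfl | hi
          · exact hj
          · exact h i hi)]
      · rw [if_neg hj, if_neg (show ¬ ∀ i ∈ j :: L, α i = 0 from
          fun hall => hj (hall j List.mem_cons_self))]
    · rw [if_neg h, map_zero, if_neg (show ¬ ∀ i ∈ j :: L, α i = 0 from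
        fun hall => h fun i hi => hall i (List.mem_cons_of_mem j hi))]

lemma eS_apply (α : Fin n →₀ ℕ) :
    ((eS K n : ↥(Sn K n)) : EndPn K n) (monomial α (1 : K))
      = if α = 0 then 1 else 0 := by
  rw [eS, list_prod_factor_apply]
  by_cases h : α = 0
  · rw [if_pos (fun i _ => by rw [h]; rfl), if_pos h, h, ← one_eq]
  · rw [if_neg (fun hall => h (Finsupp.ext fun i => hall i (List.mem_finRange i))), if_neg h]

lemma eS_val (p : Pn K n) :
    ((eS K n : ↥(Sn K n)) : EndPn K n) p = coeff 0 p • (1 : Pn K n) := by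
  have : ((eS K n : ↥(Sn K n)) : EndPn K n)
      = (MvPolynomial.lcoeff K 0).smulRight (1 : Pn K n) := by
    apply end_ext
    intro α
    rw [eS_apply, LinearMap.smulRight_apply]
    simp only [lcoeff_apply, coeff_monomial]
    by_cases h : α = 0 <;> simp [h]
  rw [this, LinearMap.smulRight_apply, lcoeff_apply]

lemma mulLeft_monomial_mem (α : Fin n →₀ ℕ) :
    LinearMap.mulLeft K (monomial α (1 : K)) ∈ Sn K n := by
  induction α using Finsupp.induction with
  | zero =>
    rw [← one_eq, LinearMap.mulLeft_one, ← Module.End.one_eq_id]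
    exact one_mem _
  | single_add a b f ha0 hb ih =>
    rw [show monomial (Finsupp.single a b + f) (1 : K)
        = monomial (Finsupp.single a b) 1 * monomial f 1 by rw [monomial_mul, one_mul],
      LinearMap.mulLeft_mul, ← Module.End.mul_eq_comp]
    refine mul_mem ?_ ih
    rw [← X_pow_eq_monomial, ← LinearMap.pow_mulLeft]
    exact pow_mem (xS K n a).2 b

/-- `x^α` as an element of `Sₙ`. -/
def xPow (K : Type*) [Field K] (n : ℕ) (α : Fin n →₀ ℕ) : ↥(Sn K n) :=
  ⟨LinearMap.mulLeft K (monomial α (1 : K)), mulLeft_monomial_mem α⟩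

lemma xPow_val_apply (α γ : Fin n →₀ ℕ) (c : K) :
    ((xPow K n α : ↥(Sn K n)) : EndPn K n) (monomial γ c) = monomial (γ + α) c := by
  show monomial α 1 * monomial γ c = _
  rw [monomial_mul, one_mul, add_comm]

lemma eS_mul_xPow (α : Fin n →₀ ℕ) (hα : α ≠ 0) :
    eS K n * xPow K n α = 0 := by
  obtain ⟨i, hi⟩ : ∃ i, α i ≠ 0 := by
    by_contra h
    push_neg at h
    exact hα (Finsupp.ext h)
  apply Subtype.ext
  apply end_ext
  intro γ
  rw [mul_val_apply, xPow_val_apply, eS_apply, if_neg, ZeroMemClass.coe_zero,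
    LinearMap.zero_apply]
  intro h
  have := congrFun (congrArg (fun f : Fin n →₀ ℕ => (f : Fin n → ℕ)) h) i
  simp only [Finsupp.coe_add, Pi.add_apply, Finsupp.coe_zero, Pi.zero_apply] at this
  omega

lemma yS_mul_eS (i : Fin n) : yS K n i * eS K n = 0 := by
  apply Subtype.ext
  apply end_ext
  intro γ
  rw [mul_val_apply, eS_apply, ZeroMemClass.coe_zero, LinearMap.zero_apply]
  by_cases h : γ = 0
  · rw [if_pos h, show ((yS K n i : ↥(Sn K n)) : EndPn K n) = yE K n i from rfl,
      one_eq, yE_apply, if_pos]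
    rfl
  · rw [if_neg h, map_zero]

/-- `x^α e` as an element of `Sₙ`. -/
def EA (K : Type*) [Field K] (n : ℕ) (α : Fin n →₀ ℕ) : ↥(Sn K n) :=
  xPow K n α * eS K n

/-- `e yᵢ` as an element of `Sₙ`. -/
def FY (K : Type*) [Field K] (n : ℕ) (i : Fin n) : ↥(Sn K n) :=
  eS K n * yS K n i

lemma EA_sq (α : Fin n →₀ ℕ) (hα : α ≠ 0) : EA K n α * EA K n α = 0 := by
  have : EA K n α * EA K n α
      = xPow K n α * ((eS K n * xPow K n α) * eS K n) := by
    rw [EA]; noncomm_ring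
  rw [this, eS_mul_xPow α hα, zero_mul, mul_zero]

lemma FY_sq (i : Fin n) : FY K n i * FY K n i = 0 := by
  have : FY K n i * FY K n i
      = eS K n * ((yS K n i * eS K n) * yS K n i) := by
    rw [FY]; noncomm_ring
  rw [this, yS_mul_eS i, zero_mul, mul_zero]

/-- Generic: `1 + t` is a unit when `t * t = 0`. -/
def unitOfGen {R : Type*} [Ring R] {t : R} (ht : t * t = 0) : Rˣ where
  val := 1 + t
  inv := 1 - t
  val_inv := by
    rw [mul_sub, mul_one, add_mul, one_mul, ht, add_zero]
    abel
  inv_val := by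
    rw [mul_add, mul_one, sub_mul, one_mul, ht, sub_zero]
    abel

lemma unitOfGen_val {R : Type*} [Ring R] {t : R} (ht : t * t = 0) :
    ((unitOfGen ht : Rˣ) : R) = 1 + t := rfl

lemma comm_of_one_add {R : Type*} [Ring R] {t u : R}
    (h : (1 + t) * u = u * (1 + t)) : u * t = t * u := by
  rw [add_mul, one_mul, mul_add, mul_one] at h
  exact (add_left_cancel h).symm

lemma units_val_comm {M : Type*} [Monoid M] {a b : Mˣ} (h : a * b = b * a) :
    (a : M) * (b : M) = (b : M) * (a : M) := by
  have h2 := congrArg Units.val h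
  rwa [Units.val_mul, Units.val_mul] at h2

lemma sub_one_smul_one {K : Type*} [Field K] {A : Type*} [Ring A] [Algebra K A] (l : K) :
    (l - 1) • (1 : A) = l • 1 - 1 := by
  rw [sub_smul, one_smul]

lemma inv_smul_one_mul_smul_one {K : Type*} [Field K] {A : Type*} [Ring A] [Algebra K A]
    {l : K} (hne : l ≠ 0) : (l⁻¹ • (1 : A)) * (l • 1) = 1 := by
  rw [smul_mul_assoc, one_mul, smul_smul, inv_mul_cancel₀ hne, one_smul]

lemma smul_one_comm {K : Type*} [Field K] {A : Type*} [Ring A] [Algebra K A]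
    (c : K) (g : A) : g * (c • 1) = (c • 1) * g := by
  rw [mul_smul_comm, smul_mul_assoc, mul_one, one_mul]

lemma center_commutes {G : Type*} [Group G] {H : Subgroup G} {v : ↥H}
    (hv : v ∈ Subgroup.center ↥H) {g : G} (hg : g ∈ H) :
    (⟨g, hg⟩ : ↥H) * v = v * ⟨g, hg⟩ :=
  (Subgroup.mem_center_iff.mp hv ⟨g, hg⟩)

lemma center_commutes_units {G : Type*} [Group G] {H : Subgroup G} {v : ↥H}
    (hv : v ∈ Subgroup.center ↥H) {g : G} (hg : g ∈ H) :
    g * (v : G) = (v : G) * g :=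
  congrArg Subtype.val (center_commutes hv hg)

/-- The unit `1 + t` of `Sₙ` with inverse `1 - t`, for `t` of square zero. -/
def unitOf {t : ↥(Sn K n)} (ht : t * t = 0) : (↥(Sn K n))ˣ := unitOfGen (R := ↥(Sn K n)) ht

lemma unitOf_mem_unitsIn {t : ↥(Sn K n)} (ht : t * t = 0) (htI : t ∈ aI K n) :
    unitOf ht ∈ unitsIn K n (aI K n) := by
  show ((unitOf ht : (↥(Sn K n))ˣ) : ↥(Sn K n)) - 1 ∈ aI K n
  rw [unitOf, unitOfGen_val]
  exact (congrArg (· ∈ aI K n) (add_sub_cancel_left (1 : ↥(Sn K n)) t)).mpr htI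

lemma EA_val_one (α : Fin n →₀ ℕ) :
    ((EA K n α : ↥(Sn K n)) : EndPn K n) (1 : Pn K n) = monomial α (1 : K) := by
  rw [EA, mul_val_apply, one_eq, eS_apply, if_pos rfl, one_eq, xPow_val_apply, zero_add]

/-- Core computation: an element of `Sₙ` commuting with all `x^α e` (`α ≠ 0`) and with
`e y_{i₀}` is the scalar `coeff 0 (w 1)`. -/
lemma central_eq_scalar (i0 : Fin n) (w : ↥(Sn K n))
    (hc : ∀ α : Fin n →₀ ℕ, α ≠ 0 → w * EA K n α = EA K n α * w)
    (hF : w * FY K n i0 = FY K n i0 * w) :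
    w = (coeff 0 ((w : EndPn K n) 1)) • 1 := by
  set l : K := coeff 0 ((w : EndPn K n) 1) with hl
  have stepA : ∀ α : Fin n →₀ ℕ, α ≠ 0 →
      (w : EndPn K n) (monomial α (1 : K)) = l • monomial α 1 := by
    intro α hα
    have h := congrArg (fun z : ↥(Sn K n) => (z : EndPn K n) (1 : Pn K n)) (hc α hα)
    simp only [mul_val_apply] at h
    rw [EA_val_one] at h
    rw [h, EA, mul_val_apply, eS_val, map_smul, one_eq, xPow_val_apply, zero_add, ← one_eq, ← hl]
  have singlene : (Finsupp.single i0 1 : Fin n →₀ ℕ) ≠ 0 := by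
    intro hcon
    have := congrFun (congrArg (fun f : Fin n →₀ ℕ => (f : Fin n → ℕ)) hcon) i0
    simp at this
  have stepB : (w : EndPn K n) (1 : Pn K n) = l • 1 := by
    have h := congrArg
      (fun z : ↥(Sn K n) => (z : EndPn K n) (monomial (Finsupp.single i0 1) (1 : K))) hF
    simp only [mul_val_apply] at h
    have hFX : ((FY K n i0 : ↥(Sn K n)) : EndPn K n)
        (monomial (Finsupp.single i0 1) (1 : K)) = 1 := by
      rw [FY, mul_val_apply,
        show ((yS K n i0 : ↥(Sn K n)) : EndPn K n) = yE K n i0 from rfl, yE_apply,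
        if_neg (by simp), tsub_self, eS_apply, if_pos rfl]
    rw [hFX, stepA _ singlene, map_smul, hFX] at h
    exact h
  apply Subtype.ext
  apply end_ext
  intro α
  have hsmul : (((l • 1 : ↥(Sn K n)) : EndPn K n)) = l • (1 : EndPn K n) := rfl
  rw [hsmul]
  by_cases h : α = 0
  · subst h
    rw [← one_eq, stepB, LinearMap.smul_apply, Module.End.one_apply]
  · rw [stepA α h, LinearMap.smul_apply, Module.End.one_apply]

/-! ### Membership of the special elements in `𝔞ₙ` -/

lemma factor_mem_aI (i : Fin n) : (1 - xS K n i * yS K n i) ∈ aI K n := by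
  have h1 : (1 - xS K n i * yS K n i) ∈ pI K n i :=
    TwoSidedIdeal.subset_span (Set.mem_singleton _)
  exact (le_iSup (pI K n) i : pI K n i ≤ aI K n) h1

lemma factor_mul_eS (i : Fin n) :
    ((1 : ↥(Sn K n)) - xS K n i * yS K n i) * eS K n = eS K n := by
  apply Subtype.ext
  apply end_ext
  intro α
  rw [mul_val_apply, eS_apply]
  by_cases h : α = 0
  · rw [if_pos h, one_eq, factor_apply, if_pos (show (0 : Fin n →₀ ℕ) i = 0 from rfl)]
  · rw [if_neg h, map_zero]

lemma eS_mem_aI (hn : 1 ≤ n) : eS K n ∈ aI K n := by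
  rw [← factor_mul_eS (⟨0, hn⟩ : Fin n)]
  exact TwoSidedIdeal.mul_mem_right _ _ _ (factor_mem_aI _)

lemma EA_mem_aI (hn : 1 ≤ n) (α : Fin n →₀ ℕ) : EA K n α ∈ aI K n :=
  TwoSidedIdeal.mul_mem_left _ _ _ (eS_mem_aI hn)

lemma FY_mem_aI (hn : 1 ≤ n) (i : Fin n) : FY K n i ∈ aI K n :=
  TwoSidedIdeal.mul_mem_right _ _ _ (eS_mem_aI hn)

/-! ### The ideal of operators vanishing far out, and properness of `𝔞ₙ` -/

/-- Bounded downward shift property for endomorphisms. -/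
def Pred (s : EndPn K n) (B : ℕ) : Prop :=
  ∀ α γ : Fin n →₀ ℕ, coeff γ (s (monomial α (1 : K))) ≠ 0 → ∀ j, α j ≤ γ j + B

lemma apply_eq_sum (f : EndPn K n) (p : Pn K n) :
    f p = ∑ δ ∈ p.support, coeff δ p • f (monomial δ (1 : K)) := by
  conv_lhs => rw [p.as_sum]
  rw [map_sum]
  refine Finset.sum_congr rfl fun δ _ => ?_
  rw [← map_smul, MvPolynomial.smul_monomial, smul_eq_mul, mul_one]

lemma apply_coeff (f : EndPn K n) (p : Pn K n) (γ : Fin n →₀ ℕ) :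
    coeff γ (f p) = ∑ δ ∈ p.support, coeff δ p * coeff γ (f (monomial δ (1 : K))) := by
  rw [apply_eq_sum f p, MvPolynomial.coeff_sum]
  refine Finset.sum_congr rfl fun δ _ => ?_
  rw [MvPolynomial.coeff_smul, smul_eq_mul]

lemma pred_all (s : EndPn K n) (hs : s ∈ Sn K n) : ∃ B, Pred s B := by
  have hs' : s ∈ Algebra.adjoin K (Set.range (xE K n) ∪ Set.range (yE K n)) := hs
  clear hs
  induction hs' using Algebra.adjoin_induction with
  | mem x hx =>
    refine ⟨1, ?_⟩
    rcases hx with ⟨i, rfl⟩ | ⟨i, rfl⟩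
    · intro α γ hne j
      rw [xE_apply, coeff_monomial] at hne
      have : α + Finsupp.single i 1 = γ := by
        by_contra hcon
        rw [if_neg hcon] at hne
        exact hne rfl
      subst this
      simp only [Finsupp.add_apply]
      omega
    · intro α γ hne j
      rw [yE_apply] at hne
      by_cases h : α i = 0
      · rw [if_pos h] at hne
        simp at hne
      · rw [if_neg h, coeff_monomial] at hne
        have : α - Finsupp.single i 1 = γ := by
          by_contra hcon
          rw [if_neg hcon] at hne
          exact hne rfl
        subst this
        rw [Finsupp.tsub_apply]
        by_cases hji : j = i
        · subst hji
          rw [Finsupp.single_eq_same]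
          omega
        · rw [Finsupp.single_eq_of_ne' (Ne.symm hji)]
          omega
  | algebraMap r =>
    refine ⟨0, fun α γ hne j => ?_⟩
    rw [Module.algebraMap_end_apply, MvPolynomial.coeff_smul, smul_eq_mul,
      coeff_monomial] at hne
    have : α = γ := by
      by_contra hcon
      rw [if_neg hcon, mul_zero] at hne
      exact hne rfl
    subst this
    omega
  | add x y hx hy ihx ihy =>
    obtain ⟨B1, h1⟩ := ihx
    obtain ⟨B2, h2⟩ := ihy
    refine ⟨B1 + B2, fun α γ hne j => ?_⟩
    rw [LinearMap.add_apply, MvPolynomial.coeff_add] at hne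
    by_cases hx0 : coeff γ (x (monomial α (1 : K))) = 0
    · have hy0 : coeff γ (y (monomial α (1 : K))) ≠ 0 := by
        intro h0; rw [hx0, h0, add_zero] at hne; exact hne rfl
      have := h2 α γ hy0 j
      omega
    · have := h1 α γ hx0 j
      omega
  | mul x y hx hy ihx ihy =>
    obtain ⟨B1, h1⟩ := ihx
    obtain ⟨B2, h2⟩ := ihy
    refine ⟨B1 + B2, fun α γ hne j => ?_⟩
    rw [Module.End.mul_apply, apply_coeff] at hne
    obtain ⟨δ, hδmem, hδ⟩ := Finset.exists_ne_zero_of_sum_ne_zero hne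
    have hδ1 : coeff δ (y (monomial α (1 : K))) ≠ 0 := fun h0 => hδ (by rw [h0, zero_mul])
    have hδ2 : coeff γ (x (monomial δ (1 : K))) ≠ 0 := fun h0 => hδ (by rw [h0, mul_zero])
    have b1 := h1 δ γ hδ2 j
    have b2 := h2 α δ hδ1 j
    omega

/-- The two-sided ideal of elements of `Sₙ` killing all monomials far from the origin. -/
def J (K : Type*) [Field K] (n : ℕ) : TwoSidedIdeal ↥(Sn K n) :=
  TwoSidedIdeal.mk'
    {t : ↥(Sn K n) | ∃ B : ℕ, ∀ α : Fin n →₀ ℕ, (∀ j, B ≤ α j) →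
      (t : EndPn K n) (monomial α (1 : K)) = 0}
    ⟨0, fun α _ => rfl⟩
    (by
      rintro x y ⟨B1, h1⟩ ⟨B2, h2⟩
      refine ⟨B1 + B2, fun α hα => ?_⟩
      have e1 : ((x + y : ↥(Sn K n)) : EndPn K n) = (x : EndPn K n) + y := rfl
      rw [e1, LinearMap.add_apply, h1 α (fun j => by have := hα j; omega),
        h2 α (fun j => by have := hα j; omega), add_zero])
    (by
      rintro x ⟨B, h⟩
      refine ⟨B, fun α hα => ?_⟩
      have e1 : ((-x : ↥(Sn K n)) : EndPn K n) = -(x : EndPn K n) := rfl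
      rw [e1, LinearMap.neg_apply, h α hα, neg_zero])
    (by
      rintro x y ⟨B, h⟩
      refine ⟨B, fun α hα => ?_⟩
      rw [mul_val_apply, h α hα, map_zero])
    (by
      rintro x y ⟨B, h⟩
      obtain ⟨C, hC⟩ := pred_all (y : EndPn K n) y.2
      refine ⟨B + C, fun α hα => ?_⟩
      rw [mul_val_apply, apply_eq_sum]
      refine Finset.sum_eq_zero fun δ hδ => ?_
      rw [h δ, smul_zero]
      intro j
      have hne : coeff δ ((y : EndPn K n) (monomial α (1 : K))) ≠ 0 :=
        MvPolynomial.mem_support_iff.mp hδ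
      have := hC α δ hne j
      have := hα j
      omega)

lemma factor_mem_J (i : Fin n) : (1 - xS K n i * yS K n i) ∈ J K n := by
  rw [J, TwoSidedIdeal.mem_mk']
  refine ⟨1, fun α hα => ?_⟩
  have h1 : α i ≠ 0 := by have := hα i; omega
  have e1 : (((1 : ↥(Sn K n)) - xS K n i * yS K n i : ↥(Sn K n)) : EndPn K n)
      = 1 - xE K n i * yE K n i := rfl
  rw [e1, LinearMap.sub_apply, Module.End.one_apply, Module.End.mul_apply, yE_apply,
    if_neg h1, xE_apply,
    tsub_add_cancel_of_le (Finsupp.single_le_iff.mpr (Nat.one_le_iff_ne_zero.mpr h1)),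
    sub_self]

lemma aI_le_J : aI K n ≤ J K n := by
  rw [aI]
  refine iSup_le fun i => ?_
  rw [TwoSidedIdeal.le_iff]
  intro x hx
  rw [SetLike.mem_coe] at hx ⊢
  rw [pI] at hx
  exact TwoSidedIdeal.mem_span_iff.mp hx (J K n)
    (by
      intro z hz
      rw [Set.mem_singleton_iff] at hz
      subst hz
      exact factor_mem_J i)

lemma one_not_mem_J : (1 : ↥(Sn K n)) ∉ J K n := by
  rw [J, TwoSidedIdeal.mem_mk']
  rintro ⟨B, h⟩
  have := h (Finsupp.equivFunOnFinite.symm fun _ => B) (fun j => by simp)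
  have e1 : ((1 : ↥(Sn K n)) : EndPn K n) = 1 := rfl
  rw [e1, Module.End.one_apply] at this
  exact one_ne_zero (MvPolynomial.monomial_eq_zero.mp this)

lemma one_ne_zero_Sn : (1 : ↥(Sn K n)) ≠ 0 := by
  intro h
  have h2 : ((1 : ↥(Sn K n)) : EndPn K n) (1 : Pn K n) = ((0 : ↥(Sn K n)) : EndPn K n) 1 :=
    congrArg (fun z : ↥(Sn K n) => (z : EndPn K n) (1 : Pn K n)) h
  have e1 : ((1 : ↥(Sn K n)) : EndPn K n) = 1 := rfl
  have e0 : ((0 : ↥(Sn K n)) : EndPn K n) = 0 := rfl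
  rw [e1, e0, Module.End.one_apply, LinearMap.zero_apply] at h2
  exact one_ne_zero h2

end CenterAux

end Aux

open CenterAux in
/-- The centre of `Sₙ*` is `K*·1` and the centre of `(1+𝔞ₙ)*` is trivial. -/
theorem center_units_Sn (K : Type*) [Field K] (n : ℕ) (hn : 1 ≤ n) :
    (∀ u : (↥(Sn K n))ˣ, u ∈ Subgroup.center (↥(Sn K n))ˣ ↔ ∃ c : Kˣ, (u : ↥(Sn K n)) = (c : K) • 1) ∧
    (∀ v : ↥(unitsIn K n (aI K n)),
      v ∈ Subgroup.center ↥(unitsIn K n (aI K n)) ↔ v = 1) := by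
  have i0 : Fin n := ⟨0, hn⟩
  constructor
  · intro u
    constructor
    · intro hu
      have hcomm := Subgroup.mem_center_iff.mp hu
      have hcA : ∀ α : Fin n →₀ ℕ, α ≠ 0 →
          (u : ↥(Sn K n)) * EA K n α = EA K n α * (u : ↥(Sn K n)) := by
        intro α hα
        have h := units_val_comm (hcomm (unitOf (EA_sq α hα)))
        rw [unitOf, unitOfGen_val] at h
        exact comm_of_one_add h
      have hcF : (u : ↥(Sn K n)) * FY K n i0 = FY K n i0 * (u : ↥(Sn K n)) := by
        have h := units_val_comm (hcomm (unitOf (FY_sq i0)))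
        rw [unitOf, unitOfGen_val] at h
        exact comm_of_one_add h
      have key := central_eq_scalar i0 (u : ↥(Sn K n)) hcA hcF
      set l : K := coeff 0 (((u : ↥(Sn K n)) : EndPn K n) 1) with hldef
      have hl : l ≠ 0 := by
        intro h0
        rw [h0, zero_smul] at key
        have h1 := u.mul_inv
        rw [key, zero_mul] at h1
        exact one_ne_zero_Sn h1.symm
      exact ⟨Units.mk0 l hl, key⟩
    · rintro ⟨c, hc⟩
      refine Subgroup.mem_center_iff.mpr fun g => ?_
      apply Units.ext
      rw [Units.val_mul, Units.val_mul, hc]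
      apply Subtype.ext
      apply end_ext
      intro γ
      show ((g : ↥(Sn K n)) : EndPn K n) ((c : K) • monomial γ (1 : K))
          = (c : K) • ((g : ↥(Sn K n)) : EndPn K n) (monomial γ 1)
      exact map_smul _ _ _
  · intro v
    constructor
    · intro hv
      have hcA : ∀ α : Fin n →₀ ℕ, α ≠ 0 →
          ((v : (↥(Sn K n))ˣ) : ↥(Sn K n)) * EA K n α
            = EA K n α * ((v : (↥(Sn K n))ˣ) : ↥(Sn K n)) := by
        intro α hα
        have hmem := unitOf_mem_unitsIn (EA_sq (K := K) α hα) (EA_mem_aI hn α)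
        have h := units_val_comm (center_commutes_units hv hmem)
        rw [unitOf, unitOfGen_val] at h
        exact comm_of_one_add h
      have hcF : ((v : (↥(Sn K n))ˣ) : ↥(Sn K n)) * FY K n i0
          = FY K n i0 * ((v : (↥(Sn K n))ˣ) : ↥(Sn K n)) := by
        have hmem := unitOf_mem_unitsIn (FY_sq (K := K) i0) (FY_mem_aI hn i0)
        have h := units_val_comm (center_commutes_units hv hmem)
        rw [unitOf, unitOfGen_val] at h
        exact comm_of_one_add h
      have key := central_eq_scalar i0 ((v : (↥(Sn K n))ˣ) : ↥(Sn K n)) hcA hcF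
      set l : K := coeff 0 ((((v : (↥(Sn K n))ˣ) : ↥(Sn K n)) : EndPn K n) 1) with hldef
      have hmemv : ((v : (↥(Sn K n))ˣ) : ↥(Sn K n)) - 1 ∈ aI K n := v.2
      have hsub : (l - 1) • (1 : ↥(Sn K n)) ∈ J K n := by
        apply aI_le_J
        have hkey : ∀ p : Pn K n,
            ((((v : (↥(Sn K n))ˣ) : ↥(Sn K n))) : EndPn K n) p = l • p :=
          fun p => congrArg (fun z : ↥(Sn K n) => (z : EndPn K n) p) key
        have heq : (l - 1) • (1 : ↥(Sn K n))
            = ((v : (↥(Sn K n))ˣ) : ↥(Sn K n)) - 1 := by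
          apply Subtype.ext
          apply end_ext
          intro γ
          show (l - 1) • monomial γ (1 : K)
              = ((((v : (↥(Sn K n))ˣ) : ↥(Sn K n))) : EndPn K n) (monomial γ 1)
                - monomial γ 1
          rw [hkey, sub_smul, one_smul]
        rw [heq]
        exact hmemv
      have hl1 : l = 1 := by
        by_contra hl
        have hne : l - 1 ≠ 0 := sub_ne_zero.mpr hl
        have hone : ((l - 1)⁻¹ • (1 : ↥(Sn K n))) * ((l - 1) • (1 : ↥(Sn K n)))
            = (1 : ↥(Sn K n)) := by
          apply Subtype.ext
          apply end_ext
          intro γ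
          show (l - 1)⁻¹ • ((l - 1) • (monomial γ (1 : K))) = monomial γ 1
          rw [smul_smul, inv_mul_cancel₀ hne, one_smul]
        have hinJ : (1 : ↥(Sn K n)) ∈ J K n := by
          rw [← hone]
          exact TwoSidedIdeal.mul_mem_left _ _ _ hsub
        exact one_not_mem_J hinJ
      have hveq : ((v : (↥(Sn K n))ˣ) : ↥(Sn K n)) = 1 := by
        rw [key, hl1, one_smul]
      apply Subtype.ext
      apply Units.ext
      exact hveq
    · rintro rfl
      exact (Subgroup.center _).one_mem
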